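/- arXiv:1904.07752 — 2 statements merged into one kernel-verified Lean document; each statement's English description precedes it below -/
import Mathlib

section
/- Suppose (X,Y) is a random variable with values in 𝒳 × 𝒴, k and l are measurable kernels on 𝒳 and 𝒴 with E[k(X,X)] < ∞ and E[l(Y,Y)] < ∞, and C_YX : H_X → H_Y is the cross-covariance operator C_YX = E[ψ(Y) ⊗ φ(X)]. Then for all f ∈ H_X and g ∈ H_Y, ⟨g, C_YX f⟩_{H_Y} = E[f(X) g(Y)] (the uncentered cross-covariance of f(X) and g(Y)). -/
open MeasureTheory
open scoped InnerProductSpace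

/-- For the cross-covariance operator C_YX = E[ψ(Y) ⊗ φ(X)] (a Bochner integral of
    rank-one operators), ⟨g, C_YX f⟩ = E[f(X) g(Y)], where by the reproducing property
    f(X) = ⟨φ(X), f⟩ and g(Y) = ⟨ψ(Y), g⟩. -/
theorem stmt_7 {Ω 𝒳 𝒴 : Type*} [MeasurableSpace Ω]
    {HX HY : Type*} [NormedAddCommGroup HX] [InnerProductSpace ℝ HX]
    [NormedAddCommGroup HY] [InnerProductSpace ℝ HY] [CompleteSpace HY]
    (P : Measure Ω) [IsProbabilityMeasure P]
    (X : Ω → 𝒳) (Y : Ω → 𝒴) (φ : 𝒳 → HX) (ψ : 𝒴 → HY)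
    (hmX : AEStronglyMeasurable (fun ω => φ (X ω)) P)
    (hmY : AEStronglyMeasurable (fun ω => ψ (Y ω)) P)
    (hk : Integrable (fun ω => ⟪φ (X ω), φ (X ω)⟫_ℝ) P)
    (hl : Integrable (fun ω => ⟪ψ (Y ω), ψ (Y ω)⟫_ℝ) P)
    (f : HX) (g : HY) :
    ⟪g, ∫ ω, ⟪φ (X ω), f⟫_ℝ • ψ (Y ω) ∂P⟫_ℝ =
      ∫ ω, ⟪φ (X ω), f⟫_ℝ * ⟪ψ (Y ω), g⟫_ℝ ∂P := by
  have hint : Integrable (fun ω => ⟪φ (X ω), f⟫_ℝ • ψ (Y ω)) P := by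
    refine Integrable.mono'
      (((hk.add hl).const_mul (‖f‖ / 2))) ?_ ?_
    · exact (hmX.inner (aestronglyMeasurable_const)).smul hmY
    · filter_upwards with ω
      have h1 : ‖⟪φ (X ω), f⟫_ℝ • ψ (Y ω)‖ ≤ ‖φ (X ω)‖ * ‖f‖ * ‖ψ (Y ω)‖ := by
        rw [norm_smul]
        gcongr
        exact norm_inner_le_norm _ _
      refine h1.trans ?_
      simp only [Pi.add_apply]
      rw [real_inner_self_eq_norm_sq, real_inner_self_eq_norm_sq]
      nlinarith [norm_nonneg (φ (X ω)), norm_nonneg (ψ (Y ω)), norm_nonneg f,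
        sq_nonneg (‖φ (X ω)‖ - ‖ψ (Y ω)‖)]
  rw [← integral_inner hint g] at *
  · simp [real_inner_smul_right, real_inner_comm g, mul_comm]
end

section
/- (Proposition: reweighted operator identity.) Under the joint density setup with operator A as above and RKHS H_X, H_Y with kernels k, l satisfying the integrability conditions (E[k(X,X)] < ∞, E[l(Y,Y)] < ∞): if Af ∈ H_Y for f ∈ H_X, then C_YY(Af) = C_YX f, where C_YY = E[ψ(Y) ⊗ ψ(Y)] and C_YX = E[ψ(Y) ⊗ φ(X)]. Formally: for all g ∈ H_Y, ⟨C_YY(Af), g⟩_{H_Y} = ⟨C_YX f, g⟩_{H_Y}. -/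
open MeasureTheory
open scoped InnerProductSpace

/- Integrating `(A f) g` against the marginal density `ν` cancels the factor `1 / ν` in `A f`,
leaving the iterated integral `∫ y, ∫ x, f x g y p(x, y)`, which is `E[f(X) g(Y)]` by Fubini. -/

theorem integral_inv_mul_integral_mul_eq_integral_prod {α β : Type*} [MeasurableSpace α]
    [MeasurableSpace β] {μ : Measure α} {ν : Measure β} [SFinite μ] [SFinite ν]
    (p : α → β → ℝ) (w : β → ℝ) (hw : ∀ᵐ y ∂ν, w y ≠ 0) (φ : α → ℝ) (ψ : β → ℝ)
    (hint : Integrable (fun z : α × β => φ z.1 * ψ z.2 * p z.1 z.2) (μ.prod ν)) :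
    ∫ y, (w y)⁻¹ * (∫ x, p x y * φ x ∂μ) * ψ y * w y ∂ν
      = ∫ z : α × β, φ z.1 * ψ z.2 * p z.1 z.2 ∂(μ.prod ν) := by
  rw [integral_prod_symm _ hint]
  refine integral_congr_ae ?_
  filter_upwards [hw] with y hy
  calc (w y)⁻¹ * (∫ x, p x y * φ x ∂μ) * ψ y * w y = (∫ x, p x y * φ x ∂μ) * ψ y := by
        field_simp
    _ = ∫ x, p x y * φ x * ψ y ∂μ := (integral_mul_const _ _).symm
    _ = ∫ x, φ x * ψ y * p x y ∂μ := by congr 1; ext x; ring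

/-- Reweighted operator identity: if Af ∈ H_Y, then C_YY (Af) = C_YX f, where
    ⟨C_YY h, g⟩ = E[h(Y)g(Y)] = ∫ h(y)g(y)ν(y)dy and
    ⟨C_YX f, g⟩ = E[f(X)g(Y)] = ∬ f(x)g(y)p(x,y)dxdy, and
    (Af)(y) = (1/ν(y)) ∫ p(x,y) f(x) dx. -/
theorem stmt_11 {𝒳 𝒴 : Type*} [MeasurableSpace 𝒳] [MeasurableSpace 𝒴]
    {HX HY : Type*} [NormedAddCommGroup HX] [InnerProductSpace ℝ HX]
    [NormedAddCommGroup HY] [InnerProductSpace ℝ HY]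
    (mX : Measure 𝒳) (mY : Measure 𝒴) [SFinite mX] [SFinite mY]
    (p : 𝒳 → 𝒴 → ℝ) (ν : 𝒴 → ℝ) (hν : ∀ y, ν y ≠ 0)
    (evX : HX → 𝒳 → ℝ) (evY : HY → 𝒴 → ℝ)
    (CYY : HY → HY) (CYX : HX → HY)
    (hCYY : ∀ h g : HY, ⟪CYY h, g⟫_ℝ = ∫ y, evY h y * evY g y * ν y ∂mY)
    (hCYX : ∀ (f : HX) (g : HY),
      ⟪CYX f, g⟫_ℝ = ∫ z : 𝒳 × 𝒴, evX f z.1 * evY g z.2 * p z.1 z.2 ∂(mX.prod mY))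
    (f : HX) (Af : HY)
    (hAf : ∀ y, evY Af y = (ν y)⁻¹ * ∫ x, p x y * evX f x ∂mX)
    (hint : ∀ g : HY,
      Integrable (fun z : 𝒳 × 𝒴 => evX f z.1 * evY g z.2 * p z.1 z.2) (mX.prod mY)) :
    ∀ g : HY, ⟪CYY Af, g⟫_ℝ = ⟪CYX f, g⟫_ℝ := by
  intro g
  rw [hCYY, hCYX, ← integral_inv_mul_integral_mul_eq_integral_prod p ν
    (.of_forall hν) _ _ (hint g)]
  simp only [hAf]
end
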